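/- arXiv:1902.05454 — 2 statements merged into one kernel-verified Lean document; each statement's English description precedes it below -/
import Mathlib

section
/- If x₁,…,xₙ are independent samples from a distribution with CDF F and G is their empirical CDF, then for any 0 ≤ b ≤ 1 and 0 ≤ ε ≤ 1/2, the probability that there exists x ≥ 0 with 1 − G(x) ≥ b and (1 − G(x))/(1+ε) > 1 − F(x) is at most exp(−ε²nb/4). -/
/-!
The event is Wellner's event for `λ = 1 + ε`, and for `ε ≤ 1/2` the rate
`f(1/(1+ε)) = 1/(1+ε) + log(1+ε) − 1` is at least `ε²/4`: with `log(1+ε) ≥ 2ε/(2+ε)` it is at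
least `ε²/((1+ε)(2+ε))`, and `(1+ε)(2+ε) ≤ 4`.
-/

open MeasureTheory

lemma sq_div_four_le_inv_one_add_add_log_one_add_sub_one {ε : ℝ} (h0 : 0 ≤ ε) (h2 : ε ≤ 1 / 2) :
    ε ^ 2 / 4 ≤ 1 / (1 + ε) + Real.log (1 + ε) - 1 := by
  have hden : 0 < (1 + ε) * (ε + 2) := by positivity
  calc ε ^ 2 / 4 ≤ ε ^ 2 / ((1 + ε) * (ε + 2)) :=
        div_le_div_of_nonneg_left (sq_nonneg ε) hden (by nlinarith)
    _ = 1 / (1 + ε) + 2 * ε / (ε + 2) - 1 := by field_simp; ring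
    _ ≤ 1 / (1 + ε) + Real.log (1 + ε) - 1 := by
        gcongr; exact Real.le_log_one_add_of_nonneg h0

theorem stmt1_general {Ω : Type*} [MeasurableSpace Ω] (μ : Measure Ω) (n : ℕ)
    (F : ℝ → ℝ) (G : Ω → ℝ → ℝ) (b ε : ℝ) (hb0 : 0 ≤ b) (hε0 : 0 ≤ ε) (hε2 : ε ≤ 1/2)
    (wellner : ∀ lam : ℝ, 1 ≤ lam →
      μ {ω | ∃ x, 0 ≤ x ∧ b ≤ 1 - G ω x ∧ lam * (1 - F x) < 1 - G ω x}
        ≤ ENNReal.ofReal (Real.exp (-(n * b * (1 / lam + Real.log lam - 1))))) :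
    μ {ω | ∃ x, 0 ≤ x ∧ b ≤ 1 - G ω x ∧ (1 - G ω x) / (1 + ε) > 1 - F x}
      ≤ ENNReal.ofReal (Real.exp (-(ε ^ 2 * n * b) / 4)) := by
  have hset : {ω | ∃ x, 0 ≤ x ∧ b ≤ 1 - G ω x ∧ (1 - G ω x) / (1 + ε) > 1 - F x}
      = {ω | ∃ x, 0 ≤ x ∧ b ≤ 1 - G ω x ∧ (1 + ε) * (1 - F x) < 1 - G ω x} := by
    ext ω
    simp only [Set.mem_ofPred_eq, gt_iff_lt, lt_div_iff₀ (by linarith : (0 : ℝ) < 1 + ε), mul_comm]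
  rw [hset]
  refine (wellner (1 + ε) (by linarith)).trans (ENNReal.ofReal_le_ofReal (Real.exp_le_exp.2 ?_))
  have hnb : (0 : ℝ) ≤ n * b := by positivity
  linarith [mul_le_mul_of_nonneg_left
    (sq_div_four_le_inv_one_add_add_log_one_add_sub_one hε0 hε2) hnb]

/-- Lemma 1 (Wellner-type bound): let `x₁,…,xₙ` be i.i.d. samples from a distribution with CDF
`F`, and `G` their empirical CDF. Assuming Wellner's inequality (with `f(x) = x + ln(1/x) − 1`,
so that `f(1/λ) = 1/λ + ln λ − 1`), for any `0 ≤ b ≤ 1` and `0 ≤ ε ≤ 1/2` the probability that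
some `x ≥ 0` satisfies both `1 − G(x) ≥ b` and `(1 − G(x))/(1+ε) > 1 − F(x)` is at most
`exp(−ε²nb/4)`. -/
theorem stmt1 {Ω : Type*} [MeasurableSpace Ω] (μ : Measure Ω) [IsProbabilityMeasure μ]
    (n : ℕ) (hn : 1 ≤ n) (X : Fin n → Ω → ℝ)
    (hmeas : ∀ i, Measurable (X i))
    (hindep : ProbabilityTheory.iIndepFun X μ)
    (F : ℝ → ℝ) (hF : ∀ i x, (μ {ω | X i ω ≤ x}).toReal = F x)
    (G : Ω → ℝ → ℝ)
    (hG : ∀ ω x, G ω x = ((Finset.univ.filter (fun i => X i ω ≤ x)).card : ℝ) / n)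
    (b ε : ℝ) (hb0 : 0 ≤ b) (hb1 : b ≤ 1) (hε0 : 0 ≤ ε) (hε2 : ε ≤ 1/2)
    (wellner : ∀ lam : ℝ, 1 ≤ lam →
      μ {ω | ∃ x, 0 ≤ x ∧ b ≤ 1 - G ω x ∧ lam * (1 - F x) < 1 - G ω x}
        ≤ ENNReal.ofReal (Real.exp (-(n * b * (1 / lam + Real.log lam - 1))))) :
    μ {ω | ∃ x, 0 ≤ x ∧ b ≤ 1 - G ω x ∧ (1 - G ω x) / (1 + ε) > 1 - F x}
      ≤ ENNReal.ofReal (Real.exp (-(ε ^ 2 * n * b) / 4)) :=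
  stmt1_general μ n F G b ε hb0 hε0 hε2 wellner
end

section
/- If configuration i is (ε,δ)-suboptimal, then there exists a timeout threshold φ such that R_φ(i) > (1+ε)·R(i*) and Pr_{j∼Γ}(R(i,j) > φ) ≥ δ, where i* is the configuration minimizing uncapped expected runtime. -/
/-!
Let `φ` be the infimum of the timeouts `θ` whose tail probability `Pr(R > θ)` is at most `δ`.
The runtime is at least `κ₀`, so this infimum is finite, and continuity of the measure from below
shows that `φ` itself has tail probability at most `δ`. Suboptimality then gives
`R_φ > (1 + ε)·OPT`, and by continuity of `θ ↦ R_θ` this strict inequality persists slightly to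
the left of `φ`, where the tail probability exceeds `δ` by minimality of `φ`.
-/

open MeasureTheory Filter Topology

section TailMeasure

variable {α : Type*} [MeasurableSpace α] (μ : Measure α) (f : α → ℝ)

theorem measure_lt_le_of_forall_lt {a : ℝ} {c : ENNReal}
    (h : ∀ θ, a < θ → μ {x | θ < f x} ≤ c) : μ {x | a < f x} ≤ c := by
  have hunion : {x | a < f x} = ⋃ n : ℕ, {x | a + 1 / (n + 1 : ℝ) < f x} := by
    ext x
    simp only [Set.mem_ofPred_eq, Set.mem_iUnion]
    constructor
    · intro hx
      obtain ⟨n, hn⟩ := exists_nat_one_div_lt (sub_pos.mpr hx)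
      exact ⟨n, by linarith⟩
    · rintro ⟨n, hn⟩
      linarith [Nat.one_div_pos_of_nat (α := ℝ) (n := n)]
  have hmono : Monotone fun n : ℕ => {x | a + 1 / (n + 1 : ℝ) < f x} := by
    intro m n hmn x hx
    have : 1 / (n + 1 : ℝ) ≤ 1 / (m + 1 : ℝ) := Nat.one_div_le_one_div hmn
    simp only [Set.mem_ofPred_eq] at hx ⊢
    linarith
  rw [hunion, hmono.measure_iUnion]
  exact iSup_le fun n => h _ (lt_add_of_pos_right a Nat.one_div_pos_of_nat)

theorem toReal_measure_lt_le_of_forall_lt [IsFiniteMeasure μ] {a δ : ℝ}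
    (h : ∀ θ, a < θ → (μ {x | θ < f x}).toReal ≤ δ) : (μ {x | a < f x}).toReal ≤ δ := by
  have hδ : 0 ≤ δ := le_trans ENNReal.toReal_nonneg (h (a + 1) (lt_add_one a))
  simp_rw [← ENNReal.le_ofReal_iff_toReal_le (measure_ne_top μ _) hδ] at h ⊢
  exact measure_lt_le_of_forall_lt μ f h

theorem csInf_mem_setOf_toReal_measure_lt_le [IsFiniteMeasure μ] {δ : ℝ}
    (hne : ∃ θ, (μ {x | θ < f x}).toReal ≤ δ) :
    sInf {θ | (μ {x | θ < f x}).toReal ≤ δ} ∈ {θ | (μ {x | θ < f x}).toReal ≤ δ} := by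
  refine toReal_measure_lt_le_of_forall_lt μ f fun θ hθ => ?_
  obtain ⟨s, hs, hsθ⟩ := exists_lt_of_csInf_lt hne hθ
  refine le_trans (ENNReal.toReal_mono (measure_ne_top μ _) (measure_mono ?_)) hs
  exact fun x hx => hsθ.trans hx

theorem bddBelow_setOf_toReal_measure_lt_le [IsProbabilityMeasure μ] {κ₀ δ : ℝ}
    (hδ : δ < 1) (hf : ∀ x, κ₀ ≤ f x) : BddBelow {θ | (μ {x | θ < f x}).toReal ≤ δ} := by
  refine ⟨κ₀, fun θ hθ => ?_⟩
  by_contra! hθκ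
  have huniv : {x | θ < f x} = Set.univ :=
    Set.eq_univ_of_forall fun x => hθκ.trans_le (hf x)
  rw [Set.mem_ofPred_eq, huniv, measure_univ, ENNReal.toReal_one] at hθ
  linarith

end TailMeasure

theorem stmt7_general {J : Type*} [MeasurableSpace J] (Γ : Measure J) [IsProbabilityMeasure Γ]
    (R : J → ℝ) (κ₀ : ℝ) (hRκ : ∀ j, κ₀ ≤ R j)
    (ε δ OPT : ℝ) (hδ1 : δ < 1)
    (Rcap : ℝ → ℝ)
    (hcont : Continuous Rcap)
    (hne : ∃ θ, (Γ {j | R j > θ}).toReal ≤ δ)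
    (hsub : ∀ θ, (Γ {j | R j > θ}).toReal ≤ δ → (1 + ε) * OPT < Rcap θ) :
    ∃ φ, (1 + ε) * OPT < Rcap φ ∧ δ ≤ (Γ {j | R j > φ}).toReal := by
  set S := {θ | (Γ {j | θ < R j}).toReal ≤ δ}
  have hbdd : BddBelow S := bddBelow_setOf_toReal_measure_lt_le Γ R hδ1 hRκ
  have hinf : sInf S ∈ S := csInf_mem_setOf_toReal_measure_lt_le Γ R hne
  have hnear : ∀ᶠ θ in 𝓝 (sInf S), (1 + ε) * OPT < Rcap θ :=
    hcont.continuousAt.eventually (lt_mem_nhds (hsub _ hinf))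
  obtain ⟨φ, hφ, hφcap⟩ := hnear.exists_lt
  have hφS : φ ∉ S := notMem_of_lt_csInf hφ hbdd
  exact ⟨φ, hφcap, (not_le.mp hφS).le⟩

/-- Claim 1 (claim:subopt): if configuration `i` is `(ε,δ)`-suboptimal (i.e. for every timeout
`θ` with `Pr_j(R(i,j) > θ) ≤ δ` we have `R_θ(i) > (1+ε)·R(i*)`, where `i*` minimizes uncapped
expected runtime with value `OPT`), and `θ ↦ R_θ(i)` is continuous, then there is a timeout `φ`
with `R_φ(i) > (1+ε)·OPT` and `Pr_j(R(i,j) > φ) ≥ δ`. -/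
theorem stmt7 {J : Type*} [MeasurableSpace J] (Γ : Measure J) [IsProbabilityMeasure Γ]
    (R : J → ℝ) (κ₀ : ℝ) (hκ : 0 < κ₀) (hRκ : ∀ j, κ₀ ≤ R j)
    (ε δ OPT : ℝ) (hε : 0 < ε) (hδ0 : 0 < δ) (hδ1 : δ < 1)
    (Rcap : ℝ → ℝ) (hRcap : ∀ θ, Rcap θ = ∫ j, min (R j) θ ∂Γ)
    (hcont : Continuous Rcap)
    (hne : ∃ θ, (Γ {j | R j > θ}).toReal ≤ δ)
    (hsub : ∀ θ, (Γ {j | R j > θ}).toReal ≤ δ → (1 + ε) * OPT < Rcap θ) :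
    ∃ φ, (1 + ε) * OPT < Rcap φ ∧ δ ≤ (Γ {j | R j > φ}).toReal :=
  stmt7_general Γ R κ₀ hRκ ε δ OPT hδ1 Rcap hcont hne hsub
end
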